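/- Let L : ℝⁿ → ℝ be differentiable with H-Lipschitz gradient for some H > 0, let 0 < α ≤ 1/H and c ∈ [0, 1). Let θ ∈ ℝⁿ with g₀ := ∇L(θ) ≠ 0, let g_ω ∈ ℝⁿ with g_ω ≠ 0, and define d := g₀ + (c‖g₀‖/‖g_ω‖) · g_ω and cos φ := ⟨g₀, g_ω⟩/(‖g₀‖‖g_ω‖). If cos φ ≤ 0, then L(θ − αd) − L(θ) ≤ −(α/2)(1 − c² + 2c·cos φ)‖g₀‖². -/

import Mathlib

/-!
The descent lemma for an `H`-Lipschitz gradient, applied with a step `α ≤ 1 / H`, gives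
`L (θ - α d) - L θ ≤ -(α / 2) (‖g₀‖² - ‖d - g₀‖²)`, and `‖d - g₀‖ = c ‖g₀‖` by the choice of `d`.
This is CAGrad's bound `-(α / 2) (1 - c²) ‖g₀‖²`, which dominates the refined one as soon as
`c cos φ ≤ 0`.
-/

open RealInnerProductSpace

section DescentLemma

variable {E : Type*} [NormedAddCommGroup E] [InnerProductSpace ℝ E] [CompleteSpace E]
  {f : E → ℝ} {H : ℝ}

theorem hasDerivAt_comp_add_smul_of_differentiableAt {x v : E} {t : ℝ}
    (hf : DifferentiableAt ℝ f (x + t • v)) :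
    HasDerivAt (fun s : ℝ ↦ f (x + s • v)) ⟪gradient f (x + t • v), v⟫ t := by
  have hline : HasDerivAt (fun s : ℝ ↦ x + s • v) v t := by
    simpa using ((hasDerivAt_id t).smul_const v).const_add x
  simpa [Function.comp_def] using hf.hasGradientAt.hasFDerivAt.comp_hasDerivAt t hline

theorem inner_gradient_add_smul_sub_le
    (hlip : ∀ x y, ‖gradient f x - gradient f y‖ ≤ H * ‖x - y‖) (x v : E) {t : ℝ} (ht : 0 ≤ t) :
    ⟪gradient f (x + t • v) - gradient f x, v⟫ ≤ H * t * ‖v‖ ^ 2 :=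
  calc ⟪gradient f (x + t • v) - gradient f x, v⟫
      ≤ ‖gradient f (x + t • v) - gradient f x‖ * ‖v‖ := real_inner_le_norm _ _
    _ ≤ H * ‖t • v‖ * ‖v‖ := by
        gcongr
        simpa using hlip (x + t • v) x
    _ = H * t * ‖v‖ ^ 2 := by rw [norm_smul, Real.norm_of_nonneg ht]; ring

theorem le_add_inner_gradient_add_sq_of_lipschitz_gradient (hf : Differentiable ℝ f)
    (hlip : ∀ x y, ‖gradient f x - gradient f y‖ ≤ H * ‖x - y‖) (x v : E) :
    f (x + v) ≤ f x + ⟪gradient f x, v⟫ + H / 2 * ‖v‖ ^ 2 := by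
  set φ : ℝ → ℝ := fun t ↦ f (x + t • v) - t * ⟪gradient f x, v⟫ - H / 2 * t ^ 2 * ‖v‖ ^ 2
  have hφ : ∀ t, HasDerivAt φ
      (⟪gradient f (x + t • v), v⟫ - ⟪gradient f x, v⟫ - H * t * ‖v‖ ^ 2) t := fun t ↦ by
    have hquad := ((hasDerivAt_pow 2 t).const_mul (H / 2)).mul_const (‖v‖ ^ 2)
    refine (((hasDerivAt_comp_add_smul_of_differentiableAt (x := x) (v := v) (hf _)).sub
      ((hasDerivAt_id t).mul_const ⟪gradient f x, v⟫)).sub hquad).congr_deriv ?_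
    simp only [one_mul, Nat.cast_ofNat, Nat.add_one_sub_one, pow_one]
    ring
  have hanti : AntitoneOn φ (Set.Icc 0 1) := by
    refine antitoneOn_of_deriv_nonpos (convex_Icc 0 1)
      (fun t _ ↦ (hφ t).continuousAt.continuousWithinAt)
      (fun t _ ↦ (hφ t).differentiableAt.differentiableWithinAt) fun t ht ↦ ?_
    rw [interior_Icc] at ht
    rw [(hφ t).deriv, sub_sub, sub_nonpos, ← sub_le_iff_le_add', ← inner_sub_left]
    exact inner_gradient_add_smul_sub_le hlip x v ht.1.le
  have := hanti (Set.left_mem_Icc.2 zero_le_one) (Set.right_mem_Icc.2 zero_le_one) zero_le_one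
  simp only [φ, one_smul, one_mul, one_pow, mul_one, zero_smul, add_zero, zero_mul, ne_eq,
    OfNat.ofNat_ne_zero, not_false_eq_true, zero_pow, mul_zero, sub_zero] at this
  linarith

theorem Differentiable.sub_smul_sub_le_of_lipschitz_gradient (hf : Differentiable ℝ f)
    (hlip : ∀ x y, ‖gradient f x - gradient f y‖ ≤ H * ‖x - y‖) {α : ℝ} (hα : 0 ≤ α)
    (hαH : α * H ≤ 1) (x d : E) :
    f (x - α • d) - f x ≤ -(α / 2) * (‖gradient f x‖ ^ 2 - ‖d - gradient f x‖ ^ 2) := by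
  have hdescent := le_add_inner_gradient_add_sq_of_lipschitz_gradient hf hlip x (-(α • d))
  rw [← sub_eq_add_neg, inner_neg_right, real_inner_smul_right, norm_neg, norm_smul,
    Real.norm_of_nonneg hα] at hdescent
  have hshort : α * H * (α * ‖d‖ ^ 2) ≤ α * ‖d‖ ^ 2 :=
    mul_le_of_le_one_left (by positivity) hαH
  rw [norm_sub_sq_real, real_inner_comm]
  nlinarith

end DescentLemma

theorem cagrad_refined_bound_obtuse_general {n : ℕ} (L : EuclideanSpace ℝ (Fin n) → ℝ) (H α c : ℝ)
    (hH : 0 < H) (hα : 0 < α) (hαH : α ≤ 1 / H) (hc0 : 0 ≤ c)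
    (hdiff : Differentiable ℝ L)
    (hlip : ∀ x y : EuclideanSpace ℝ (Fin n),
      ‖gradient L x - gradient L y‖ ≤ H * ‖x - y‖)
    (θ gω : EuclideanSpace ℝ (Fin n))
    (hgω : gω ≠ 0)
    (hcos : ⟪gradient L θ, gω⟫ / (‖gradient L θ‖ * ‖gω‖) ≤ 0) :
    L (θ - α • (gradient L θ + (c * ‖gradient L θ‖ / ‖gω‖) • gω)) - L θ ≤
      -(α / 2) * (1 - c ^ 2 +
          2 * c * (⟪gradient L θ, gω⟫ / (‖gradient L θ‖ * ‖gω‖))) *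
        ‖gradient L θ‖ ^ 2 := by
  set g₀ := gradient L θ
  set cosφ := ⟪g₀, gω⟫ / (‖g₀‖ * ‖gω‖)
  set d := g₀ + (c * ‖g₀‖ / ‖gω‖) • gω
  have hdev : ‖d - g₀‖ = c * ‖g₀‖ := by
    rw [add_sub_cancel_left, div_eq_mul_inv]
    exact norm_smul_inv_norm' (mul_nonneg hc0 (norm_nonneg _)) hgω
  have hstep := hdiff.sub_smul_sub_le_of_lipschitz_gradient hlip hα.le
    ((le_div_iff₀ hH).1 hαH) θ d
  have hobtuse : 0 ≤ α * c * -cosφ * ‖g₀‖ ^ 2 :=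
    mul_nonneg (mul_nonneg (mul_nonneg hα.le hc0) (neg_nonneg.2 hcos)) (sq_nonneg _)
  calc L (θ - α • d) - L θ ≤ -(α / 2) * (‖g₀‖ ^ 2 - (c * ‖g₀‖) ^ 2) := hdev ▸ hstep
    _ ≤ -(α / 2) * (1 - c ^ 2 + 2 * c * cosφ) * ‖g₀‖ ^ 2 := by linarith

/-- Refined per-step bound of the re-organized CAGrad analysis in the regime `cos φ ≤ 0`:
with `d = g₀ + (c ‖g₀‖ / ‖g_ω‖) • g_ω` and `cos φ = ⟪g₀, g_ω⟫ / (‖g₀‖ ‖g_ω‖)`,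
`L (θ - α d) - L θ ≤ -(α/2)(1 - c² + 2 c cos φ) ‖g₀‖²`. -/
theorem cagrad_refined_bound_obtuse {n : ℕ} (L : EuclideanSpace ℝ (Fin n) → ℝ) (H α c : ℝ)
    (hH : 0 < H) (hα : 0 < α) (hαH : α ≤ 1 / H) (hc0 : 0 ≤ c) (hc1 : c < 1)
    (hdiff : Differentiable ℝ L)
    (hlip : ∀ x y : EuclideanSpace ℝ (Fin n),
      ‖gradient L x - gradient L y‖ ≤ H * ‖x - y‖)
    (θ gω : EuclideanSpace ℝ (Fin n))
    (hg₀ : gradient L θ ≠ 0) (hgω : gω ≠ 0)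
    (hcos : ⟪gradient L θ, gω⟫ / (‖gradient L θ‖ * ‖gω‖) ≤ 0) :
    L (θ - α • (gradient L θ + (c * ‖gradient L θ‖ / ‖gω‖) • gω)) - L θ ≤
      -(α / 2) * (1 - c ^ 2 +
          2 * c * (⟪gradient L θ, gω⟫ / (‖gradient L θ‖ * ‖gω‖))) *
        ‖gradient L θ‖ ^ 2 :=
  cagrad_refined_bound_obtuse_general L H α c hH hα hαH hc0 hdiff hlip θ gω hgω hcos
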